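/- Let U ⊂ ℝ² be open, H : U → ℝ of class C¹ with DH(x) ≠ 0 for all x ∈ U, and set b = (∂H/∂x₂, −∂H/∂x₁). Let A₀ > 0 and α ∈ (0,1) satisfy |DH(x)| ≥ A₀ |H(x)|^α for all x ∈ U. Let c ∈ ℝ, ν > 0, and let Y : [σ, τ] → U be a C¹ solution of Y′(t) = c·b(Y(t)) − ν DH(Y(t))/|DH(Y(t))|. Then (d/dt) H(Y(t)) = −ν |DH(Y(t))| for all t, so t ↦ H(Y(t)) is strictly decreasing; and if H(Y(t)) ≥ 0 for all t ∈ [σ, τ], then H(Y(σ))^{1−α} − H(Y(τ))^{1−α} ≥ (1−α) ν A₀ (τ − σ); in particular τ − σ ≤ H(Y(σ))^{1−α} / ((1−α) ν A₀). -/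

import Mathlib

open Filter Topology Set Metric

noncomputable section

/-- The plane `ℝ²` as a Euclidean space. -/
abbrev E2 : Type := EuclideanSpace ℝ (Fin 2)

/-- The Hamiltonian vector field `b = (∂H/∂x₂, −∂H/∂x₁)` of `H`. -/
def hamVF (H : E2 → ℝ) (x : E2) : E2 :=
  (WithLp.equiv 2 (Fin 2 → ℝ)).symm
    ![fderiv ℝ H x (EuclideanSpace.single 1 1), -(fderiv ℝ H x (EuclideanSpace.single 0 1))]

/-!
Since `b ⟂ DH`, the chain rule gives `(H ∘ Y)' = -ν |DH(Y)| < 0`. Where `H(Y) > 0` the bound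
`|DH| ≥ A₀ H^α` turns this into `(H(Y)^{1-α})' ≤ -(1-α) ν A₀`, and the mean value inequality
integrates it over `[σ, τ]`.
-/

lemma inner_gradient_hamVF (H : E2 → ℝ) (x : E2) : inner ℝ (gradient H x) (hamVF H x) = 0 := by
  have hcoord : ∀ i, gradient H x i = fderiv ℝ H x (EuclideanSpace.single i 1) := fun i => by
    rw [← inner_gradient_left, EuclideanSpace.inner_single_right, one_mul, RCLike.conj_to_real]
  simp only [PiLp.inner_apply, Fin.sum_univ_two, hamVF, hcoord, WithLp.equiv_symm_apply,
    Matrix.cons_val_zero, Matrix.cons_val_one, Matrix.cons_val_fin_one,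
    RCLike.inner_apply, Real.ringHom_apply]
  ring

def perturbedFlowField (H : E2 → ℝ) (c ν : ℝ) (x : E2) : E2 :=
  c • hamVF H x - (ν / ‖gradient H x‖) • gradient H x

lemma fderiv_perturbedFlowField (H : E2 → ℝ) (c ν : ℝ) (x : E2) :
    fderiv ℝ H x (perturbedFlowField H c ν x) = -(ν * ‖gradient H x‖) := by
  rw [perturbedFlowField, map_sub, map_smul, map_smul, ← inner_gradient_left,
    ← inner_gradient_left, inner_gradient_hamVF, real_inner_self_eq_norm_sq]
  simp only [smul_eq_mul, mul_zero, zero_sub, neg_inj]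
  -- where `DH x = 0` both sides vanish, `ν / 0` being `0`
  rcases eq_or_ne ‖gradient H x‖ 0 with h | h
  · simp [h]
  · field_simp

lemma hasDerivAt_comp_of_perturbedFlow {H : E2 → ℝ} {Y : ℝ → E2} {c ν t : ℝ}
    (hH : DifferentiableAt ℝ H (Y t)) (hY : HasDerivAt Y (perturbedFlowField H c ν (Y t)) t) :
    HasDerivAt (fun s => H (Y s)) (-(ν * ‖gradient H (Y t)‖)) t := by
  rw [← fderiv_perturbedFlowField]
  exact hH.hasFDerivAt.comp_hasDerivAt t hY

lemma mul_sub_le_rpow_sub_rpow_of_hasDerivAt_le {f f' : ℝ → ℝ} {a b K α : ℝ} (hα : α < 1)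
    (hab : a ≤ b) (hf : ContinuousOn f (Icc a b)) (hf' : ∀ t ∈ Ioo a b, HasDerivAt f (f' t) t)
    (hpos : ∀ t ∈ Ioo a b, 0 < f t) (hbound : ∀ t ∈ Ioo a b, f' t ≤ -(K * f t ^ α)) :
    (1 - α) * K * (b - a) ≤ f a ^ (1 - α) - f b ^ (1 - α) := by
  have hα' : 0 < 1 - α := sub_pos.mpr hα
  have hder : ∀ t ∈ Ioo a b,
      HasDerivAt (fun s => f s ^ (1 - α)) (f' t * (1 - α) * f t ^ (1 - α - 1)) t :=
    fun t ht => (hf' t ht).rpow_const (Or.inl (hpos t ht).ne')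
  have hder_le : ∀ t ∈ Ioo a b, f' t * (1 - α) * f t ^ (1 - α - 1) ≤ -((1 - α) * K) := by
    intro t ht
    have hcancel : f t ^ α * f t ^ (1 - α - 1) = 1 := by
      rw [← Real.rpow_add (hpos t ht)]; norm_num
    calc f' t * (1 - α) * f t ^ (1 - α - 1)
        ≤ -(K * f t ^ α) * (1 - α) * f t ^ (1 - α - 1) := by
          gcongr
          · exact (Real.rpow_pos_of_pos (hpos t ht) _).le
          · exact hbound t ht
      _ = -((1 - α) * K) * (f t ^ α * f t ^ (1 - α - 1)) := by ring
      _ = -((1 - α) * K) := by rw [hcancel, mul_one]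
  have hmvt := (convex_Icc a b).image_sub_le_mul_sub_of_deriv_le
    (hf.rpow_const fun _ _ => Or.inr hα'.le)
    (fun t ht => (hder t (by rwa [interior_Icc] at ht)).differentiableAt.differentiableWithinAt)
    (fun t ht => by
      rw [interior_Icc] at ht
      exact (hder t ht).deriv ▸ hder_le t ht)
    a (left_mem_Icc.mpr hab) b (right_mem_Icc.mpr hab) hab
  linarith

theorem descent_along_gradient_perturbed_flow_general
    (U : Set E2) (hU : IsOpen U)
    (H : E2 → ℝ) (hH : ContDiffOn ℝ 1 H U)
    (hDH : ∀ x ∈ U, gradient H x ≠ 0)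
    (A₀ α : ℝ) (hA₀ : 0 < A₀) (hα1 : α < 1)
    (hlow : ∀ x ∈ U, A₀ * |H x| ^ α ≤ ‖gradient H x‖)
    (c ν : ℝ) (hν : 0 < ν)
    (σ τ : ℝ) (hστ : σ ≤ τ)
    (Y : ℝ → E2) (hYU : ∀ t ∈ Icc σ τ, Y t ∈ U)
    (hY : ∀ t ∈ Icc σ τ, HasDerivAt Y
      (c • hamVF H (Y t) - (ν / ‖gradient H (Y t)‖) • gradient H (Y t)) t) :
    (∀ t ∈ Icc σ τ, HasDerivAt (fun s => H (Y s)) (-(ν * ‖gradient H (Y t)‖)) t) ∧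
    StrictAntiOn (fun t => H (Y t)) (Icc σ τ) ∧
    ((∀ t ∈ Icc σ τ, 0 ≤ H (Y t)) →
      (1 - α) * ν * A₀ * (τ - σ) ≤ H (Y σ) ^ (1 - α) - H (Y τ) ^ (1 - α) ∧
      τ - σ ≤ H (Y σ) ^ (1 - α) / ((1 - α) * ν * A₀)) := by
  have hHY : ∀ t ∈ Icc σ τ, HasDerivAt (fun s => H (Y s)) (-(ν * ‖gradient H (Y t)‖)) t :=
    fun t ht => hasDerivAt_comp_of_perturbedFlow
      ((hH.contDiffAt (hU.mem_nhds (hYU t ht))).differentiableAt one_ne_zero) (hY t ht)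
  have hcont : ContinuousOn (fun t => H (Y t)) (Icc σ τ) :=
    fun t ht => (hHY t ht).continuousAt.continuousWithinAt
  have hanti : StrictAntiOn (fun t => H (Y t)) (Icc σ τ) :=
    strictAntiOn_of_hasDerivWithinAt_neg (convex_Icc σ τ) hcont
      (fun t ht => (hHY t (interior_subset ht)).hasDerivWithinAt)
      (fun t ht => neg_neg_of_pos
        (mul_pos hν (norm_pos_iff.mpr (hDH _ (hYU t (interior_subset ht))))))
  refine ⟨hHY, hanti, fun hnonneg => ?_⟩
  have hτ : τ ∈ Icc σ τ := right_mem_Icc.mpr hστ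
  have hpos : ∀ t ∈ Ioo σ τ, 0 < H (Y t) := fun t ht =>
    (hnonneg τ hτ).trans_lt (hanti (Ioo_subset_Icc_self ht) hτ ht.2)
  have hdecay := mul_sub_le_rpow_sub_rpow_of_hasDerivAt_le (K := ν * A₀) hα1 hστ hcont
    (fun t ht => hHY t (Ioo_subset_Icc_self ht)) hpos fun t ht => by
      have hlow_t := hlow _ (hYU t (Ioo_subset_Icc_self ht))
      rw [abs_of_pos (hpos t ht)] at hlow_t
      nlinarith
  have hC : 0 < (1 - α) * ν * A₀ := by have := sub_pos.mpr hα1; positivity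
  refine ⟨by linarith, ?_⟩
  rw [le_div_iff₀' hC]
  linarith [Real.rpow_nonneg (hnonneg τ hτ) (1 - α)]

/-- Along a solution of `Y′ = c b(Y) − ν DH(Y)/|DH(Y)|`, the value
`H(Y(t))` decreases with derivative `−ν |DH(Y(t))|`; if moreover `|DH| ≥ A₀ |H|^α` on `U`
and `H(Y(t)) ≥ 0`, then `H(Y(σ))^{1−α} − H(Y(τ))^{1−α} ≥ (1−α) ν A₀ (τ−σ)`, and in
particular `τ − σ ≤ H(Y(σ))^{1−α} / ((1−α) ν A₀)`. -/
theorem descent_along_gradient_perturbed_flow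
    (U : Set E2) (hU : IsOpen U)
    (H : E2 → ℝ) (hH : ContDiffOn ℝ 1 H U)
    (hDH : ∀ x ∈ U, gradient H x ≠ 0)
    (A₀ α : ℝ) (hA₀ : 0 < A₀) (hα0 : 0 < α) (hα1 : α < 1)
    (hlow : ∀ x ∈ U, A₀ * |H x| ^ α ≤ ‖gradient H x‖)
    (c ν : ℝ) (hν : 0 < ν)
    (σ τ : ℝ) (hστ : σ ≤ τ)
    (Y : ℝ → E2) (hYU : ∀ t ∈ Icc σ τ, Y t ∈ U)
    (hY : ∀ t ∈ Icc σ τ, HasDerivAt Y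
      (c • hamVF H (Y t) - (ν / ‖gradient H (Y t)‖) • gradient H (Y t)) t) :
    (∀ t ∈ Icc σ τ, HasDerivAt (fun s => H (Y s)) (-(ν * ‖gradient H (Y t)‖)) t) ∧
    StrictAntiOn (fun t => H (Y t)) (Icc σ τ) ∧
    ((∀ t ∈ Icc σ τ, 0 ≤ H (Y t)) →
      (1 - α) * ν * A₀ * (τ - σ) ≤ H (Y σ) ^ (1 - α) - H (Y τ) ^ (1 - α) ∧
      τ - σ ≤ H (Y σ) ^ (1 - α) / ((1 - α) * ν * A₀)) :=
  descent_along_gradient_perturbed_flow_general U hU H hH hDH A₀ α hA₀ hα1 hlow c ν hν σ τ hστ Y hYU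
    hY
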